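/- Let (Σ, I) be a trace alphabet and let L ⊆ Σ^ω be a trace-closed ω-language. Define the 3-valued verdict of a finite word u with respect to L by: verdict(u) = ⊤ if u·σ ∈ L for every infinite word σ; verdict(u) = ⊥ if u·σ ∉ L for every infinite word σ; and verdict(u) = ? otherwise. Then for all finite words u, v over Σ with u ≈ v, verdict(u) = verdict(v); that is, the 3-valued verdict is invariant under trace equivalence of the observed prefix. -/
import Mathlib


/- Projection of a finite word onto a set of letters: delete all letters not in `p`. -/
open Classical in
noncomputable def proj {A : Type*} (p : Set A) : List A → List A
  | [] => []
  | a :: u => if a ∈ p then a :: proj p u else proj p u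

/- `p` is a `D`-clique for the dependence relation `D = (Σ×Σ) \ I`:
all pairs of letters of `p` are dependent, i.e. not independent. -/
def IsDClique {A : Type*} (I : A → A → Prop) (p : Set A) : Prop :=
  ∀ a ∈ p, ∀ b ∈ p, ¬ I a b

/-- Trace equivalence of finite words: equal projections onto every `D`-clique. -/
def TraceEquiv {A : Type*} (I : A → A → Prop) (u v : List A) : Prop :=
  ∀ p : Set A, IsDClique I p → proj p u = proj p v

/- The `n`-th letter (if it exists) of the projection of the infinite word `w`
onto the set of letters `p`, i.e. of the finite or infinite subsequence of `w`
consisting of exactly those letters of `w` lying in `p`, taken in order. -/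
open Classical in
noncomputable def projInf {A : Type*} (p : Set A) (w : ℕ → A) (n : ℕ) : Option A :=
  if h : ∃ k, n < (proj p ((List.range k).map w)).length
  then (proj p ((List.range (Nat.find h)).map w))[n]?
  else none

/- Trace equivalence of infinite words: equal projections onto every `D`-clique. -/
def TraceEquivInf {A : Type*} (I : A → A → Prop) (w w' : ℕ → A) : Prop :=
  ∀ p : Set A, IsDClique I p → projInf p w = projInf p w'

/-- An ω-language is trace closed iff membership is invariant under trace equivalence. -/
def TraceClosed {A : Type*} (I : A → A → Prop) (L : Set (ℕ → A)) : Prop :=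
  ∀ w w', TraceEquivInf I w w' → (w ∈ L ↔ w' ∈ L)

/-- The infinite word `u·σ` obtained by prepending the finite word `u` to `σ`. -/
def prepend {A : Type*} (u : List A) (σ : ℕ → A) : ℕ → A :=
  fun n => if h : n < u.length then u[n] else σ (n - u.length)

/-- The three truth values `⊤`, `⊥`, `?`. -/
inductive Verdict : Type
  | top      -- ⊤
  | bot      -- ⊥
  | unknown  -- ?
deriving DecidableEq

/- The 3-valued verdict of a finite word `u` with respect to an ω-language `L`. -/
open Classical in
noncomputable def verdict {A : Type*} (L : Set (ℕ → A)) (u : List A) : Verdict :=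
  if ∀ σ : ℕ → A, prepend u σ ∈ L then Verdict.top
  else if ∀ σ : ℕ → A, prepend u σ ∉ L then Verdict.bot
  else Verdict.unknown


lemma proj_append {A : Type*} (p : Set A) (l1 l2 : List A) :
    proj p (l1 ++ l2) = proj p l1 ++ proj p l2 := by
  induction l1 with
  | nil => simp [proj]
  | cons a t ih =>
    by_cases h : a ∈ p <;> simp [proj, h, ih]

lemma range_map_prepend {A : Type*} (u : List A) (σ : ℕ → A) (m : ℕ) :
    (List.range (u.length + m)).map (prepend u σ) = u ++ (List.range m).map σ := by
  apply List.ext_getElem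
  · simp
  · intro i h1 h2
    simp only [List.getElem_map, List.getElem_range]
    by_cases hi : i < u.length
    · rw [List.getElem_append_left hi]
      simp [prepend, hi]
    · rw [List.getElem_append_right (le_of_not_gt hi)]
      simp [prepend, hi]

lemma prefix_prefproj {A : Type*} (p : Set A) (w : ℕ → A) {k k' : ℕ} (h : k ≤ k') :
    proj p ((List.range k).map w) <+: proj p ((List.range k').map w) := by
  obtain ⟨m, rfl⟩ := Nat.le.dest h
  rw [List.range_add, List.map_append, proj_append]
  exact List.prefix_append _ _

lemma projInf_eq {A : Type*} (p : Set A) (w : ℕ → A) (n k : ℕ)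
    (hk : n < (proj p ((List.range k).map w)).length) :
    projInf p w n = (proj p ((List.range k).map w))[n]? := by
  have h : ∃ k, n < (proj p ((List.range k).map w)).length := ⟨k, hk⟩
  rw [projInf, dif_pos h]
  have hf := Nat.find_spec h
  rcases le_total (Nat.find h) k with hle | hle
  · obtain ⟨t, ht⟩ := prefix_prefproj p w hle
    rw [← ht, List.getElem?_append_left hf]
  · obtain ⟨t, ht⟩ := prefix_prefproj p w hle
    rw [← ht, List.getElem?_append_left hk]

lemma prepend_traceEquivInf {A : Type*} (I : A → A → Prop) (u v : List A)
    (h : TraceEquiv I u v) (σ : ℕ → A) :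
    TraceEquivInf I (prepend u σ) (prepend v σ) := by
  intro p hp
  have hpuv := h p hp
  funext n
  have key : ∀ m, proj p ((List.range (u.length + m)).map (prepend u σ))
      = proj p ((List.range (v.length + m)).map (prepend v σ)) := by
    intro m
    rw [range_map_prepend, range_map_prepend, proj_append, proj_append, hpuv]
  by_cases hex : ∃ k, n < (proj p ((List.range k).map (prepend u σ))).length
  · obtain ⟨k, hk⟩ := hex
    have hk' : n < (proj p ((List.range (u.length + k)).map (prepend u σ))).length :=
      lt_of_lt_of_le hk (prefix_prefproj p (prepend u σ) (Nat.le_add_left k u.length)).length_le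
    have hk2 : n < (proj p ((List.range (v.length + k)).map (prepend v σ))).length := by
      rw [← key k]; exact hk'
    rw [projInf_eq p _ n _ hk', projInf_eq p _ n _ hk2, key]
  · have hex' : ¬ ∃ k, n < (proj p ((List.range k).map (prepend v σ))).length := by
      rintro ⟨k, hk⟩
      exact hex ⟨u.length + k, by
        rw [key k]
        exact lt_of_lt_of_le hk
          (prefix_prefproj p (prepend v σ) (Nat.le_add_left k v.length)).length_le⟩
    rw [projInf, dif_neg hex, projInf, dif_neg hex']

/-- for a trace-closed ω-language, the 3-valued verdict is invariant
under trace equivalence of the observed prefix. -/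
theorem stmt8 {A : Type*} [Fintype A] (I : A → A → Prop)
    (hirr : ∀ a, ¬ I a a) (hsym : ∀ a b, I a b → I b a)
    (L : Set (ℕ → A)) (hL : TraceClosed I L)
    (u v : List A) (h : TraceEquiv I u v) :
    verdict L u = verdict L v := by
  classical
  have hmem : ∀ σ : ℕ → A, prepend u σ ∈ L ↔ prepend v σ ∈ L :=
    fun σ => hL _ _ (prepend_traceEquivInf I u v h σ)
  have h1 : (∀ σ : ℕ → A, prepend u σ ∈ L) ↔ (∀ σ : ℕ → A, prepend v σ ∈ L) :=
    forall_congr' hmem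
  have h2 : (∀ σ : ℕ → A, prepend u σ ∉ L) ↔ (∀ σ : ℕ → A, prepend v σ ∉ L) :=
    forall_congr' fun σ => not_congr (hmem σ)
  unfold verdict
  congr 1
  · exact propext h1
  · exact if_congr h2 rfl rfl
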